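/- Let g : ℝ^d → ℝ^p be injective, f_causal : ℝ^d → ℝ, and ε a real random variable with mean 0 and variance σ². Define h_causal : Im(g) → ℝ by h_causal(g(z)) = f_causal(z) (well-defined by injectivity). For h : ℝ^p → ℝ define the worst-case risk S(h) = sup_{a ∈ ℝ^d} E[(f_causal(a) + ε - h(g(a)))²]. Then S(h) ≥ σ² for all h, S(h) = σ² if and only if h agrees with h_causal on Im(g), and consequently every minimizer of S coincides with f_causal ∘ g⁻¹ on the image of g. -/

import Mathlib

/-!
Because `ε` is centred, the risk of `h` under `do(Z = a)` is `(f_causal a - h (g a))² + σ²`,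
so the worst-case risk is at least `σ²`, with equality exactly when `h ∘ g = f_causal`.
Injectivity of `g` makes `f_causal ∘ g⁻¹` such a predictor, so every minimizer attains `σ²`
too.
-/

open MeasureTheory

theorem integral_const_add_sq {Ω : Type*} [MeasurableSpace Ω] {μ : Measure Ω}
    [IsProbabilityMeasure μ] {X : Ω → ℝ} (hX : MemLp X 2 μ) (c : ℝ) :
    ∫ ω, (c + X ω) ^ 2 ∂μ = c ^ 2 + 2 * c * ∫ ω, X ω ∂μ + ∫ ω, X ω ^ 2 ∂μ := by
  have hX1 : Integrable X μ := hX.integrable one_le_two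
  have hX2 : Integrable (fun ω => X ω ^ 2) μ := hX.integrable_sq
  have hlin : Integrable (fun ω => c ^ 2 + 2 * c * X ω) μ :=
    (integrable_const _).add (hX1.const_mul _)
  calc ∫ ω, (c + X ω) ^ 2 ∂μ = ∫ ω, (c ^ 2 + 2 * c * X ω) + X ω ^ 2 ∂μ := by
        congr with ω; ring
    _ = c ^ 2 + 2 * c * ∫ ω, X ω ∂μ + ∫ ω, X ω ^ 2 ∂μ := by
        rw [integral_add hlin hX2,
          integral_add (integrable_const _) (hX1.const_mul _), integral_const_mul]
        simp

theorem ENNReal.ofReal_le_iSup_ofReal_sq_add {ι : Type*} [Nonempty ι] (x : ι → ℝ) (s : ℝ) :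
    ENNReal.ofReal s ≤ ⨆ i, ENNReal.ofReal (x i ^ 2 + s) :=
  let i := Classical.arbitrary ι
  (ENNReal.ofReal_le_ofReal (le_add_of_nonneg_left (sq_nonneg (x i)))).trans
    (le_iSup (fun i => ENNReal.ofReal (x i ^ 2 + s)) i)

theorem ENNReal.iSup_ofReal_sq_add_eq_ofReal_iff {ι : Type*} [Nonempty ι] (x : ι → ℝ)
    {s : ℝ} (hs : 0 ≤ s) :
    ⨆ i, ENNReal.ofReal (x i ^ 2 + s) = ENNReal.ofReal s ↔ ∀ i, x i = 0 := by
  refine ⟨fun h i => ?_, fun h => ?_⟩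
  · have hle := (le_iSup (fun i => ENNReal.ofReal (x i ^ 2 + s)) i).trans h.le
    rw [ENNReal.ofReal_le_ofReal_iff hs] at hle
    exact pow_eq_zero_iff two_ne_zero |>.mp (le_antisymm (by linarith) (sq_nonneg _))
  · simp [h]

/-- Lemma 2: with observations X = g(Z) for injective g, do-interventions do(Z = a)
for all a ∈ ℝ^d and Y = f_causal(a) + ε, the worst-case risk
S(h) = sup_a E[(Y - h(g(a)))²] satisfies S(h) ≥ σ² for all h, S(h) = σ² iff h
agrees with h_causal = f_causal ∘ g⁻¹ on Im(g), and every minimizer of S agrees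
with f_causal ∘ g⁻¹ on Im(g). -/
theorem stmt_2 {d p : ℕ} {Ω : Type*} [MeasurableSpace Ω] (μ : Measure Ω)
    [IsProbabilityMeasure μ] (ε : Ω → ℝ) (hε2 : MemLp ε 2 μ)
    (hmean : ∫ ω, ε ω ∂μ = 0)
    (σ2 : ℝ) (hσ2 : σ2 = ∫ ω, (ε ω) ^ 2 ∂μ)
    (g : (Fin d → ℝ) → (Fin p → ℝ)) (hg : Function.Injective g)
    (f_causal : (Fin d → ℝ) → ℝ) :
    (∀ h : (Fin p → ℝ) → ℝ,
      ENNReal.ofReal σ2 ≤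
        ⨆ a : Fin d → ℝ, ENNReal.ofReal (∫ ω, (f_causal a + ε ω - h (g a)) ^ 2 ∂μ)) ∧
    (∀ h : (Fin p → ℝ) → ℝ,
      (⨆ a : Fin d → ℝ, ENNReal.ofReal (∫ ω, (f_causal a + ε ω - h (g a)) ^ 2 ∂μ))
          = ENNReal.ofReal σ2
        ↔ ∀ a : Fin d → ℝ, h (g a) = f_causal a) ∧
    (∀ h : (Fin p → ℝ) → ℝ,
      (∀ h' : (Fin p → ℝ) → ℝ,
        (⨆ a : Fin d → ℝ, ENNReal.ofReal (∫ ω, (f_causal a + ε ω - h (g a)) ^ 2 ∂μ)) ≤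
          ⨆ a : Fin d → ℝ, ENNReal.ofReal (∫ ω, (f_causal a + ε ω - h' (g a)) ^ 2 ∂μ)) →
      ∀ a : Fin d → ℝ, h (g a) = f_causal a) := by
  have hσ2_nonneg : 0 ≤ σ2 := by
    rw [hσ2]; exact integral_nonneg fun ω => sq_nonneg _
  have risk_eq (h : (Fin p → ℝ) → ℝ) :
      (⨆ a : Fin d → ℝ, ENNReal.ofReal (∫ ω, (f_causal a + ε ω - h (g a)) ^ 2 ∂μ)) =
        ⨆ a, ENNReal.ofReal ((f_causal a - h (g a)) ^ 2 + σ2) := by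
    refine iSup_congr fun a => congrArg ENNReal.ofReal ?_
    simp_rw [add_sub_right_comm _ (ε _), integral_const_add_sq hε2, hmean, hσ2, mul_zero,
      add_zero]
  have risk_eq_iff (h : (Fin p → ℝ) → ℝ) :
      (⨆ a : Fin d → ℝ, ENNReal.ofReal (∫ ω, (f_causal a + ε ω - h (g a)) ^ 2 ∂μ))
          = ENNReal.ofReal σ2 ↔ ∀ a, h (g a) = f_causal a := by
    rw [risk_eq, ENNReal.iSup_ofReal_sq_add_eq_ofReal_iff _ hσ2_nonneg]
    simp only [sub_eq_zero, eq_comm]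
  have risk_ge (h : (Fin p → ℝ) → ℝ) : ENNReal.ofReal σ2 ≤
      ⨆ a : Fin d → ℝ, ENNReal.ofReal (∫ ω, (f_causal a + ε ω - h (g a)) ^ 2 ∂μ) :=
    (risk_eq h).ge.trans' (ENNReal.ofReal_le_iSup_ofReal_sq_add _ σ2)
  refine ⟨risk_ge, risk_eq_iff, fun h hmin a => ?_⟩
  have h_causal_eq := (risk_eq_iff (f_causal ∘ Function.invFun g)).2 fun b =>
    congrArg f_causal (Function.leftInverse_invFun hg b)
  exact (risk_eq_iff h).1 (le_antisymm ((hmin _).trans_eq h_causal_eq) (risk_ge h)) a
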